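/- Let G be a group, H a complex Hilbert space, and π a unitary representation of G on H, i.e. a group homomorphism from G to the group of linear isometric equivalences of H. Let b : G → H satisfy the cocycle identity b(gh) = π(g)·b(h) + b(g) for all g, h ∈ G. Let S ⊆ G be a finite subset closed under inversion and β : G → ℝ a nonnegative function supported in S with β(g⁻¹) = β(g) for all g. If b is β-harmonic, i.e. ∑_{g ∈ S} β(g)·b(g) = 0, then for every w ∈ H, ∑_{g ∈ S} β(g)·⟪b(g), w − π(g)w⟫ = 0; that is, b is β-orthogonal to every coboundary ∂_w(g) = w − π(g)w. -/

import Mathlib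

open scoped ComplexInnerProductSpace

/-!
Write `b g = -π g (b g⁻¹)` (the cocycle identity at `g * g⁻¹ = 1`). Since `π g` is unitary,
`⟪b g, π g w⟫ = -⟪b g⁻¹, w⟫`, so pairing `b` with the coboundary of `w` splits as
`∑ β g ⟪b g, w⟫ + ∑ β g ⟪b g⁻¹, w⟫`. Reindexing by `g ↦ g⁻¹` uses the symmetry of `S` and `β`
to turn the second sum into the first, which is `⟪∑ β g • b g, w⟫ = 0` by harmonicity.
-/

lemma Finset.sum_comp_inv_of_inv_mem {ι M : Type*} [InvolutiveInv ι] [AddCommMonoid M]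
    {S : Finset ι} (hS : ∀ g ∈ S, g⁻¹ ∈ S) (f : ι → M) :
    ∑ g ∈ S, f g⁻¹ = ∑ g ∈ S, f g :=
  Finset.sum_nbij' (·⁻¹) (·⁻¹) hS hS (fun g _ ↦ inv_inv g) (fun g _ ↦ inv_inv g)
    (fun _ _ ↦ rfl)

section Cocycle

variable {G H : Type*} [Group G] [NormedAddCommGroup H] [InnerProductSpace ℂ H]
  {π : G →* (H ≃ₗᵢ[ℂ] H)} {b : G → H}

lemma cocycle_one (hb : ∀ g h : G, b (g * h) = π g (b h) + b g) : b 1 = 0 := by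
  simpa using hb 1 1

lemma cocycle_eq_neg_map_inv (hb : ∀ g h : G, b (g * h) = π g (b h) + b g) (g : G) :
    b g = -π g (b g⁻¹) := by
  have h := hb g g⁻¹
  rw [mul_inv_cancel, cocycle_one hb] at h
  exact eq_neg_of_add_eq_zero_right h.symm

lemma inner_cocycle_coboundary (hb : ∀ g h : G, b (g * h) = π g (b h) + b g) (g : G) (w : H) :
    ⟪b g, w - π g w⟫ = ⟪b g, w⟫ + ⟪b g⁻¹, w⟫ := by
  have hmap : ⟪b g, π g w⟫ = -⟪b g⁻¹, w⟫ := by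
    rw [cocycle_eq_neg_map_inv hb g, inner_neg_left, (π g).inner_map_map]
  rw [inner_sub_right, hmap, sub_neg_eq_add]

end Cocycle

lemma sum_ofReal_mul_inner_eq_inner_sum {ι H : Type*} [NormedAddCommGroup H]
    [InnerProductSpace ℂ H] (S : Finset ι) (β : ι → ℝ) (v : ι → H) (w : H) :
    ∑ g ∈ S, (β g : ℂ) * ⟪v g, w⟫ = ⟪∑ g ∈ S, β g • v g, w⟫ := by
  rw [sum_inner]
  refine Finset.sum_congr rfl fun g _ ↦ ?_
  rw [← Complex.coe_smul, inner_smul_left, Complex.conj_ofReal]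

theorem stmt6_general {G : Type*} [Group G]
    {H : Type*} [NormedAddCommGroup H] [InnerProductSpace ℂ H]
    (π : G →* (H ≃ₗᵢ[ℂ] H))
    (b : G → H) (hb : ∀ g h : G, b (g * h) = π g (b h) + b g)
    (S : Finset G) (hSinv : ∀ g ∈ S, g⁻¹ ∈ S)
    (β : G → ℝ)
    (hβsymm : ∀ g : G, β g⁻¹ = β g)
    (hharm : ∑ g ∈ S, β g • b g = 0)
    (w : H) :
    ∑ g ∈ S, (β g : ℂ) * ⟪b g, w - π g w⟫ = 0 := by
  have hpaired : ∑ g ∈ S, (β g : ℂ) * ⟪b g, w⟫ = 0 := by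
    rw [sum_ofReal_mul_inner_eq_inner_sum, hharm, inner_zero_left]
  have hreflected : ∑ g ∈ S, (β g : ℂ) * ⟪b g⁻¹, w⟫ = 0 := by
    simpa only [hβsymm] using
      (Finset.sum_comp_inv_of_inv_mem hSinv fun g ↦ (β g : ℂ) * ⟪b g, w⟫).trans hpaired
  simp only [inner_cocycle_coboundary hb, mul_add, Finset.sum_add_distrib, hpaired, hreflected,
    add_zero]

/-- A `β`-harmonic cocycle (`∑_{g ∈ S} β g • b g = 0`) for a unitary
representation `π` of `G` on a complex Hilbert space is `β`-orthogonal to every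
coboundary `∂_w(g) = w − π g w`. -/
theorem stmt6 {G : Type*} [Group G]
    {H : Type*} [NormedAddCommGroup H] [InnerProductSpace ℂ H] [CompleteSpace H]
    (π : G →* (H ≃ₗᵢ[ℂ] H))
    (b : G → H) (hb : ∀ g h : G, b (g * h) = π g (b h) + b g)
    (S : Finset G) (hSinv : ∀ g ∈ S, g⁻¹ ∈ S)
    (β : G → ℝ) (hβ0 : ∀ g : G, 0 ≤ β g)
    (hβsupp : ∀ g : G, β g ≠ 0 → g ∈ S)
    (hβsymm : ∀ g : G, β g⁻¹ = β g)
    (hharm : ∑ g ∈ S, β g • b g = 0)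
    (w : H) :
    ∑ g ∈ S, (β g : ℂ) * ⟪b g, w - π g w⟫ = 0 :=
  stmt6_general π b hb S hSinv β hβsymm hharm w
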